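/- arXiv:2309.04298 — 2 statements merged into one kernel-verified Lean document; each statement's English description precedes it below -/
import Mathlib

section
/- Let d ≥ 2, let B ∈ ℝ^{d×d} satisfy B_{a,b} = 0 whenever a ≤ b (strictly lower triangular), let σ² > 0, and set Σ := σ² (I_d − B)^{-1} (I_d − B)^{-T}. Fix indices 1 ≤ i < j ≤ d and let S := {1,…,i−1}. Then the (j,i) entry of (I_d − B)^{-1} (the total causal effect of node i on node j in the associated linear structural equation model) equals Σ_{j,i|S} · (Σ_{i,i|S})^{-1} = Σ_{j,i|S} / σ². -/
open Matrix Finset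

/-- Conditional covariance `Σ_{k,i|S} = Σ_{k,i} - Σ_{k,S} (Σ_{S,S})⁻¹ Σ_{S,i}`. -/
noncomputable def condCov {d : ℕ} (M : Matrix (Fin d) (Fin d) ℝ) (S : Finset (Fin d))
    (k i : Fin d) : ℝ :=
  M k i - ∑ a : S, ∑ b : S, M k a * (Matrix.of fun a b : S => M a b)⁻¹ a b * M b i

/-!
Write `A = (I - B)⁻¹`, so that `Σ = σ² A Aᵀ` with `A` unit lower triangular. The rows of `A`
indexed by `S = {m < i}` only involve the columns in `S`, hence `Σ_{S,S} = σ² A_SS A_SSᵀ` and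
`Σ_{k,S} = σ² A_{k,S} A_SSᵀ`: the Schur complement `Σ_{k,i|S}` is `σ²` times the Gram product of
the rows `k` and `i` of `A` over the columns outside `S`. Row `i` of `A` vanishes to the right of
the diagonal, so only the column `i` contributes, giving `Σ_{k,i|S} = σ² A_{k,i} A_{i,i} = σ² A_{k,i}`.
-/

open OrderDual

namespace Matrix

section Field

variable {n K : Type*} [Fintype n] [DecidableEq n] [Field K]

theorem smul_inv₀ (c : K) (A : Matrix n n K) : (c • A)⁻¹ = c⁻¹ • A⁻¹ := by
  rcases eq_or_ne c 0 with rfl | hc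
  · simp
  by_cases hA : IsUnit A.det
  · exact inv_smul' A (Units.mk0 c hc) hA
  · have hcA : ¬IsUnit (c • A).det := by
      simpa [det_smul, isUnit_iff_ne_zero, hc] using hA
    rw [nonsing_inv_apply_not_isUnit _ hcA, nonsing_inv_apply_not_isUnit _ hA, smul_zero]

end Field

section Triangular

variable {n R : Type*} [CommRing R]

theorem IsLowerTriangular.mul_apply_self [Fintype n] [LinearOrder n] {M N : Matrix n n R}
    (hM : M.IsLowerTriangular) (hN : N.IsLowerTriangular) (a : n) :
    (M * N) a a = M a a * N a a := by
  rw [mul_apply, sum_eq_single a (fun m _ hma => ?_) (by simp)]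
  rcases hma.lt_or_gt with hlt | hgt
  · rw [hN (show toDual a < toDual m from hlt), mul_zero]
  · rw [hM (show toDual m < toDual a from hgt), zero_mul]

variable [DecidableEq n]

theorem isLowerTriangular_one_sub [LinearOrder n] {B : Matrix n n R}
    (hB : ∀ a b, a ≤ b → B a b = 0) : (1 - B).IsLowerTriangular :=
  blockTriangular_one.sub fun _ _ h => hB _ _ (le_of_lt h)

variable [Fintype n]

theorem BlockTriangular.inv {α : Type*} [LinearOrder α] {M : Matrix n n R} {b : n → α}
    (hM : M.BlockTriangular b) : M⁻¹.BlockTriangular b := by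
  by_cases hdet : IsUnit M.det
  · have : Invertible M := invertibleOfIsUnitDet M hdet
    exact blockTriangular_inv_of_blockTriangular hM
  · rw [nonsing_inv_apply_not_isUnit M hdet]
    exact blockTriangular_zero

theorem IsLowerTriangular.inv_apply_self_of_diag_eq_one [LinearOrder n] {M : Matrix n n R}
    (hM : M.IsLowerTriangular) (hdiag : ∀ a, M a a = 1) (a : n) : M⁻¹ a a = 1 := by
  have hdet : IsUnit M.det := by simp [det_of_isLowerTriangular M hM, hdiag]
  have h := (IsLowerTriangular.mul_apply_self hM.inv hM a).symm
  rwa [nonsing_inv_mul M hdet, one_apply_eq, hdiag, mul_one] at h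

end Triangular

theorem sum_sum_mul_mul_eq_dotProduct_mulVec {ι R : Type*} [Fintype ι] [CommSemiring R]
    (x y : ι → R) (X : Matrix ι ι R) :
    ∑ a, ∑ b, x a * X a b * y b = x ⬝ᵥ X *ᵥ y := by
  simp only [dotProduct, mulVec, mul_sum, mul_assoc]

end Matrix

section condCov

variable {d : ℕ}

theorem condCov_smul (M : Matrix (Fin d) (Fin d) ℝ) (S : Finset (Fin d)) (c : ℝ)
    (k i : Fin d) : condCov (c • M) S k i = c * condCov M S k i := by
  rcases eq_or_ne c 0 with rfl | hc
  · simp [condCov]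
  have hinv : (of fun a b : S => (c • M) a b)⁻¹ = c⁻¹ • (of fun a b : S => M a b)⁻¹ := by
    rw [← Matrix.smul_inv₀]; rfl
  rw [condCov, condCov, hinv]
  simp only [Matrix.smul_apply, smul_eq_mul, mul_sub, mul_sum]
  congr 1
  refine sum_congr rfl fun a _ => sum_congr rfl fun b _ => ?_
  field_simp

theorem condCov_mul_transpose (L : Matrix (Fin d) (Fin d) ℝ) (S : Finset (Fin d))
    (hL : ∀ a ∈ S, ∀ m ∉ S, L a m = 0) (hdet : IsUnit (L.submatrix (↑) (↑) : Matrix S S ℝ).det)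
    (k i : Fin d) : condCov (L * Lᵀ) S k i = ∑ m ∈ Sᶜ, L k m * L i m := by
  set P : Matrix S S ℝ := L.submatrix (↑) (↑)
  have hgram : ∀ (k : Fin d) (a : S), (L * Lᵀ) k a = ∑ m : S, L k m * L a m := by
    intro k a
    rw [mul_apply, sum_coe_sort S fun m => L k m * L a m]
    refine (sum_subset (subset_univ S) fun m _ hm => ?_).symm
    simp [hL a a.2 m hm]
  have hSS : (of fun a b : S => (L * Lᵀ) a b) = P * Pᵀ := by
    ext a b
    rw [of_apply, hgram]
    simp only [mul_apply, P, transpose_apply, submatrix_apply]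
  have hrow : (fun a : S => (L * Lᵀ) k a) = P *ᵥ fun m => L k m := by
    ext a
    rw [hgram]
    simp only [mulVec, dotProduct, P, submatrix_apply, mul_comm]
  have hcol : (fun b : S => (L * Lᵀ) b i) = P *ᵥ fun m => L i m := by
    ext b
    rw [← transpose_apply (L * Lᵀ), transpose_mul, transpose_transpose, hgram]
    simp only [mulVec, dotProduct, P, submatrix_apply, mul_comm]
  have hdetT : IsUnit Pᵀ.det := by rwa [det_transpose]
  have hquad : ∑ a : S, ∑ b : S,
      (L * Lᵀ) k a * (of fun a b : S => (L * Lᵀ) a b)⁻¹ a b * (L * Lᵀ) b i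
      = ∑ m ∈ S, L k m * L i m := by
    rw [sum_sum_mul_mul_eq_dotProduct_mulVec, hrow, hcol, hSS, Matrix.mul_inv_rev, mulVec_mulVec,
      Matrix.mul_assoc, nonsing_inv_mul P hdet, Matrix.mul_one, ← vecMul_transpose,
      ← dotProduct_mulVec, mulVec_mulVec, mul_nonsing_inv Pᵀ hdetT, one_mulVec]
    exact sum_coe_sort S fun m => L k m * L i m
  rw [condCov, hquad, mul_apply, ← sum_add_sum_compl S]
  simp only [transpose_apply, add_sub_cancel_left]

theorem condCov_mul_transpose_Iio_of_isLowerTriangular {L : Matrix (Fin d) (Fin d) ℝ}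
    (hL : L.IsLowerTriangular) (hdiag : ∀ a, L a a = 1) (k i : Fin d) :
    condCov (L * Lᵀ) (Iio i) k i = L k i := by
  have hsupp : ∀ a ∈ Iio i, ∀ m ∉ Iio i, L a m = 0 := fun a ha m hm =>
    hL (show toDual m < toDual a from (mem_Iio.1 ha).trans_le (not_lt.1 (mem_Iio.not.1 hm)))
  have hdet : IsUnit (L.submatrix (↑) (↑) : Matrix (Iio i) (Iio i) ℝ).det := by
    have hP : (L.submatrix (↑) (↑) : Matrix (Iio i) (Iio i) ℝ).IsLowerTriangular :=
      fun _ _ h => hL h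
    simp [det_of_isLowerTriangular _ hP, hdiag]
  rw [condCov_mul_transpose L _ hsupp hdet, sum_eq_single_of_mem i (by simp)
    fun m hm hmi => ?_, hdiag, mul_one]
  have him : i < m := lt_of_le_of_ne (by simpa using hm) (Ne.symm hmi)
  rw [hL (show toDual m < toDual i from him), mul_zero]

end condCov

theorem stmt3_general {d : ℕ} (B : Matrix (Fin d) (Fin d) ℝ)
    (hB : ∀ a b : Fin d, a ≤ b → B a b = 0) (σ2 : ℝ) (hσ2 : 0 < σ2)
    (Sig : Matrix (Fin d) (Fin d) ℝ)
    (hSig : Sig = σ2 • ((1 - B)⁻¹ * (1 - B)⁻¹ᵀ))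
    (i j : Fin d) :
    (1 - B)⁻¹ j i = condCov Sig (Finset.Iio i) j i / condCov Sig (Finset.Iio i) i i ∧
    (1 - B)⁻¹ j i = condCov Sig (Finset.Iio i) j i / σ2 := by
  have hC := isLowerTriangular_one_sub hB
  have hAdiag : ∀ a, (1 - B)⁻¹ a a = 1 :=
    hC.inv_apply_self_of_diag_eq_one fun a => by simp [hB a a le_rfl]
  have hcond : ∀ k, condCov Sig (Iio i) k i = σ2 * (1 - B)⁻¹ k i := fun k => by
    rw [hSig, condCov_smul, condCov_mul_transpose_Iio_of_isLowerTriangular hC.inv hAdiag]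
  rw [hcond, hcond, hAdiag, mul_one]
  exact ⟨by field_simp, by field_simp⟩

theorem stmt3 {d : ℕ} (hd : 2 ≤ d) (B : Matrix (Fin d) (Fin d) ℝ)
    (hB : ∀ a b : Fin d, a ≤ b → B a b = 0) (σ2 : ℝ) (hσ2 : 0 < σ2)
    (Sig : Matrix (Fin d) (Fin d) ℝ)
    (hSig : Sig = σ2 • ((1 - B)⁻¹ * (1 - B)⁻¹ᵀ))
    (i j : Fin d) (hij : i < j) :
    (1 - B)⁻¹ j i = condCov Sig (Finset.Iio i) j i / condCov Sig (Finset.Iio i) i i ∧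
    (1 - B)⁻¹ j i = condCov Sig (Finset.Iio i) j i / σ2 :=
  stmt3_general B hB σ2 hσ2 Sig hSig i j
end

section
/- Let d ≥ 2 and consider the map f_0 from the open set of symmetric positive definite d×d matrices to ℝ^{d−1} whose (k−1)-th component (k = 2,…,d) is Σ ↦ Σ_{k,k|{1,…,k−1}} − Σ_{1,1}. Then f_0 is differentiable and its Fréchet derivative at every symmetric positive definite Σ, viewed as a linear map from the space of symmetric d×d matrices to ℝ^{d−1}, is surjective (i.e., the Jacobian of f_0 has full rank d−1). -/
open Matrix Finset

attribute [local instance] Matrix.normedAddCommGroup Matrix.normedSpace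

/-- The defining map `f_0` of the equal-error-variance model for the complete DAG
with ordering `(1, …, d)`: the `(k-1)`-th component (`k = 2, …, d`) is
`Σ_{k,k|{1,…,k-1}} - Σ_{1,1}`. -/
noncomputable def fzero {n : ℕ}
    (Sig : Matrix (Fin (n + 2)) (Fin (n + 2)) ℝ) : Fin (n + 1) → ℝ :=
  fun m => condCov Sig (Finset.Iio (m.succ : Fin (n + 2))) m.succ m.succ - Sig 0 0

/-!
Adding to `Σ` a matrix `N` that vanishes on the rows and columns indexed by `S` changes
`Σ_{k,k|S}` by exactly `N_{k,k}`, because the Schur complement only involves `Σ_{k,k}`,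
`Σ_{k,S}`, `Σ_{S,k}` and `Σ_{S,S}`. Hence moving `Σ` along the diagonal unit matrix `E_{jj}`
changes the component `Σ_{k,k|{1,…,k-1}} - Σ_{1,1}` with `k ≤ j` at rate `δ_{jk}`: on the
directions `E_{22}, …, E_{dd}` the Jacobian of `f_0` is unitriangular, hence invertible.
Differentiability comes from Cramer's rule, the principal submatrices of `Σ` being positive
definite.
-/

section MatrixCalculus

variable {𝕜 E ι : Type*} [NontriviallyNormedField 𝕜] [NormedAddCommGroup E] [NormedSpace 𝕜 E]
  [Fintype ι] [DecidableEq ι] {f : E → Matrix ι ι 𝕜} {x : E}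

theorem differentiableAt_det_of_entries (hf : ∀ i j, DifferentiableAt 𝕜 (fun y => f y i j) x) :
    DifferentiableAt 𝕜 (fun y => (f y).det) x := by
  simp only [det_apply]
  fun_prop

theorem differentiableAt_inv_apply_of_entries
    (hf : ∀ i j, DifferentiableAt 𝕜 (fun y => f y i j) x) (hx : (f x).det ≠ 0) (i j : ι) :
    DifferentiableAt 𝕜 (fun y => (f y)⁻¹ i j) x := by
  simp only [Matrix.inv_def, Matrix.smul_apply, Ring.inverse_eq_inv', adjugate_apply, smul_eq_mul]
  refine (differentiableAt_det_of_entries hf).inv hx |>.mul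
    (differentiableAt_det_of_entries fun k l => ?_)
  by_cases hk : k = j
  · subst hk
    simp
  · simpa [updateRow_ne hk] using hf k l

end MatrixCalculus

theorem HasFDerivAt.apply_eq_of_forall_add_smul {𝕜 E F : Type*} [NontriviallyNormedField 𝕜]
    [NormedAddCommGroup E] [NormedSpace 𝕜 E] [NormedAddCommGroup F] [NormedSpace 𝕜 F]
    {f : E → F} {f' : E →L[𝕜] F} {x v : E} {w : F} (hf : HasFDerivAt f f' x)
    (h : ∀ t : 𝕜, f (x + t • v) = f x + t • w) : f' v = w := by
  have hline : HasDerivAt (fun t : 𝕜 => f x + t • w) (f' v) 0 := by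
    have := hf.hasLineDerivAt v
    unfold HasLineDerivAt at this
    simpa only [h] using this
  simpa using hline.unique (((hasDerivAt_id 0).smul_const w).const_add (f x))

theorem exists_sum_smul_eq_of_unitriangular {R ι : Type*} [CommRing R] [Fintype ι]
    [DecidableEq ι] [LinearOrder ι] (v : ι → ι → R) (hdiag : ∀ j, v j j = 1)
    (htri : ∀ i j, i < j → v j i = 0) (y : ι → R) : ∃ c : ι → R, ∑ j, c j • v j = y := by
  have hA : (of v).IsUpperTriangular := fun j i hij => htri i j hij
  have hdet : (of v).det = 1 := by
    rw [det_of_isUpperTriangular hA]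
    simp [hdiag]
  obtain ⟨c, hc⟩ := vecMul_surjective_iff_isUnit.mpr
    ((isUnit_iff_isUnit_det _).mpr (hdet ▸ isUnit_one)) y
  exact ⟨c, (vecMul_eq_sum c _).symm.trans hc⟩

section CondCov

variable {d : ℕ}

theorem differentiableAt_condCov {M : Matrix (Fin d) (Fin d) ℝ} {S : Finset (Fin d)}
    (hM : (of fun a b : S => M a b).det ≠ 0) (k i : Fin d) :
    DifferentiableAt ℝ (fun N => condCov N S k i) M := by
  have hent (p q : Fin d) :
      DifferentiableAt ℝ (fun N : Matrix (Fin d) (Fin d) ℝ => N p q) M := by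
    fun_prop
  have hinv (a b : S) : DifferentiableAt ℝ
      (fun N : Matrix (Fin d) (Fin d) ℝ => (of fun a b : S => N a b)⁻¹ a b) M :=
    differentiableAt_inv_apply_of_entries
      (f := fun N : Matrix (Fin d) (Fin d) ℝ => of fun a b : S => N a b)
      (fun _ _ => by simp only [of_apply]; fun_prop) hM a b
  unfold condCov
  exact (hent k i).sub <| .fun_sum fun a _ => .fun_sum fun b _ =>
    ((hent k a).mul (hinv a b)).mul (hent b i)

theorem condCov_add_of_forall_eq_zero (M N : Matrix (Fin d) (Fin d) ℝ) (S : Finset (Fin d))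
    (k i : Fin d) (hN : ∀ a b, a ∈ S ∨ b ∈ S → N a b = 0) :
    condCov (M + N) S k i = condCov M S k i + N k i := by
  have hsub : (of fun a b : S => (M + N) a b) = of fun a b : S => M a b := by
    ext a b
    simp [hN a b (.inl a.2)]
  simp only [condCov, hsub]
  simp [hN _ _ (.inl (Subtype.prop _)), hN _ _ (.inr (Subtype.prop _))]
  ring

end CondCov

section Fzero

variable {n : ℕ}

theorem fzero_add_apply (M N : Matrix (Fin (n + 2)) (Fin (n + 2)) ℝ) (m : Fin (n + 1))
    (hN : ∀ a b, a < m.succ ∨ b < m.succ → N a b = 0) :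
    fzero (M + N) m = fzero M m + N m.succ m.succ := by
  have h00 : N 0 0 = 0 := hN 0 0 (.inl (Fin.succ_pos m))
  have hN' : ∀ a b, a ∈ Iio m.succ ∨ b ∈ Iio m.succ → N a b = 0 := by
    simpa only [mem_Iio] using hN
  simp only [fzero, condCov_add_of_forall_eq_zero M N _ _ _ hN', Matrix.add_apply, h00]
  ring

theorem fderiv_fzero_apply {Sig N : Matrix (Fin (n + 2)) (Fin (n + 2)) ℝ}
    (hd : DifferentiableAt ℝ fzero Sig) {m : Fin (n + 1)}
    (hN : ∀ a b, a < m.succ ∨ b < m.succ → N a b = 0) :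
    fderiv ℝ fzero Sig N m = N m.succ m.succ := by
  refine (hasFDerivAt_pi'.mp hd.hasFDerivAt m).apply_eq_of_forall_add_smul fun t => ?_
  rw [fzero_add_apply Sig (t • N) m fun a b h => by simp [hN a b h]]
  simp

end Fzero

theorem stmt14_general {n : ℕ}
    (Sig : Matrix (Fin (n + 2)) (Fin (n + 2)) ℝ) (hpd : Sig.PosDef) :
    DifferentiableAt ℝ fzero Sig ∧
    ∀ y : Fin (n + 1) → ℝ, ∃ H : Matrix (Fin (n + 2)) (Fin (n + 2)) ℝ,
      H.IsSymm ∧ fderiv ℝ fzero Sig H = y := by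
  have hd : DifferentiableAt ℝ fzero Sig := differentiableAt_pi.mpr fun m =>
    (differentiableAt_condCov (hpd.submatrix Subtype.val_injective).det_pos.ne' _ _).sub
      (by fun_prop)
  refine ⟨hd, fun y => ?_⟩
  let E (j : Fin (n + 1)) : Matrix (Fin (n + 2)) (Fin (n + 2)) ℝ := single j.succ j.succ 1
  have hE (i j : Fin (n + 1)) (hij : i ≤ j) :
      fderiv ℝ fzero Sig (E j) i = if j = i then 1 else 0 := by
    rw [fderiv_fzero_apply hd fun a b h => ?_]
    · simp [E, single_apply]
    · have hji : i.succ ≤ j.succ := Fin.succ_le_succ_iff.mpr hij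
      simp only [E, single_apply]
      grind
  obtain ⟨c, hc⟩ := exists_sum_smul_eq_of_unitriangular (fun j => fderiv ℝ fzero Sig (E j))
    (fun j => by simpa using hE j j le_rfl)
    (fun i j hij => by simpa [hij.ne'] using hE i j hij.le) y
  refine ⟨∑ j, c j • E j, IsSymm.ext fun a b => ?_, by simpa [map_sum, map_smul] using hc⟩
  simp [E, Matrix.sum_apply, single_apply, and_comm]

theorem stmt14 {n : ℕ}
    (Sig : Matrix (Fin (n + 2)) (Fin (n + 2)) ℝ) (hsym : Sig.IsSymm) (hpd : Sig.PosDef) :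
    DifferentiableAt ℝ fzero Sig ∧
    ∀ y : Fin (n + 1) → ℝ, ∃ H : Matrix (Fin (n + 2)) (Fin (n + 2)) ℝ,
      H.IsSymm ∧ fderiv ℝ fzero Sig H = y :=
  stmt14_general Sig hpd
end
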